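/- arXiv:2009.13970 — 2 statements merged into one kernel-verified Lean document; each statement's English description precedes it below -/
import Mathlib

section
/- Let G be a finite p-group of class at most 3 with γ₂(G)^p γ₄(G) = 1, and S = G ⋊ A with A abelian, [G,A] ⊆ γ₃(G), [A, γ₂(G)] = 1. Then γ₄(S) = 1, i.e. S has nilpotency class at most 3. -/
/-
Write `S = N ⋊ G` as the join of `inl N` and `inr G`. By induction, `γ_{n+1}(S)` lies in the image
of `γ_{n+1}(N)`, which is normal in `S` because `γ_{n+1}(N)` is characteristic in `N`. Modulo a
normal subgroup, a commutator with a join is controlled by the commutators with its two pieces,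
so it suffices to check generators: at the first step `[N, N] = γ₂(N)`, `[N, G] ≤ γ₂(N)` and
`[G, G] = 1`; afterwards commutators with `N` descend one term of the series of `N`, while `G`
centralises `γ₂(N)` and hence every later term. For `n = 3` this gives `γ₄(S) ≤ γ₄(N) = 1`.
-/

namespace Subgroup

variable {G : Type*} [Group G] {H₁ H₂ K N : Subgroup G} [N.Normal]

theorem commutator_le_iff_map_mk'_le_centralizer :
    ⁅H₁, K⁆ ≤ N ↔ H₁.map (QuotientGroup.mk' N) ≤ centralizer (K.map (QuotientGroup.mk' N)) := by
  rw [← commutator_eq_bot_iff_le_centralizer, ← map_commutator, map_eq_bot_iff,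
    QuotientGroup.ker_mk']

theorem commutator_sup_left_le (h₁ : ⁅H₁, K⁆ ≤ N) (h₂ : ⁅H₂, K⁆ ≤ N) : ⁅H₁ ⊔ H₂, K⁆ ≤ N := by
  rw [commutator_le_iff_map_mk'_le_centralizer, map_sup] at *
  exact sup_le h₁ h₂

theorem commutator_sup_right_le (h₁ : ⁅K, H₁⁆ ≤ N) (h₂ : ⁅K, H₂⁆ ≤ N) : ⁅K, H₁ ⊔ H₂⁆ ≤ N := by
  rw [commutator_comm] at h₁ h₂ ⊢
  exact commutator_sup_left_le h₁ h₂

end Subgroup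

namespace SemidirectProduct

open Subgroup

section Group

variable {N G : Type*} [Group N] [Group G] {φ : G →* MulAut N}

theorem range_inl_sup_range_inr :
    (inl : N →* N ⋊[φ] G).range ⊔ (inr : G →* N ⋊[φ] G).range = ⊤ := by
  refine eq_top_iff.mpr fun x _ => ?_
  rw [← inl_left_mul_inr_right x]
  exact mul_mem (mem_sup_left ⟨x.left, rfl⟩) (mem_sup_right ⟨x.right, rfl⟩)

instance normal_map_inl (H : Subgroup N) [hH : H.Characteristic] :
    (H.map (inl : N →* N ⋊[φ] G)).Normal := by
  refine ⟨?_⟩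
  rintro _ ⟨x, hx, rfl⟩ t
  have hφ : φ t.right x ∈ H := characteristic_iff_le_comap.mp hH (φ t.right) hx
  have hconj : t * inl x * t⁻¹ = inl (t.left * φ t.right x * t.left⁻¹) := by
    ext <;> simp [mul_left, mul_right, inv_left, inv_right, mul_assoc]
  exact hconj ▸ mem_map_of_mem _ (H.normal_of_characteristic.conj_mem _ hφ t.left)

theorem commutator_map_inl_range_inl (H : Subgroup N) :
    ⁅H.map (inl : N →* N ⋊[φ] G), (inl : N →* N ⋊[φ] G).range⁆ = (⁅H, ⊤⁆ : Subgroup N).map inl := by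
  rw [MonoidHom.range_eq_map, map_commutator]

end Group

section CommGroup

variable {N G : Type*} [Group N] [CommGroup G] {φ : G →* MulAut N}

theorem commutator_range_inr_self :
    ⁅(inr : G →* N ⋊[φ] G).range, (inr : G →* N ⋊[φ] G).range⁆ = ⊥ := by
  rw [commutator_eq_bot_iff_le_centralizer]
  rintro _ ⟨a, rfl⟩ _ ⟨b, rfl⟩
  rw [← map_mul, ← map_mul, mul_comm]

theorem lowerCentralSeries_succ_le_map_inl
    (hNG : ⁅(inl : N →* N ⋊[φ] G).range, (inr : G →* N ⋊[φ] G).range⁆ ≤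
      ((⊤ : Subgroup N).lowerCentralSeries 1).map inl)
    (hGN : ⁅(inr : G →* N ⋊[φ] G).range,
      ((⊤ : Subgroup N).lowerCentralSeries 1).map (inl : N →* N ⋊[φ] G)⁆ = ⊥)
    (n : ℕ) :
    (⊤ : Subgroup (N ⋊[φ] G)).lowerCentralSeries (n + 1) ≤
      ((⊤ : Subgroup N).lowerCentralSeries (n + 1)).map inl := by
  have hinl : ∀ k, ⁅((⊤ : Subgroup N).lowerCentralSeries k).map (inl : N →* N ⋊[φ] G),
      (inl : N →* N ⋊[φ] G).range⁆ = ((⊤ : Subgroup N).lowerCentralSeries (k + 1)).map inl :=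
    fun k => commutator_map_inl_range_inl _
  induction n with
  | zero =>
    have hbase := hinl 0
    rw [Subgroup.lowerCentralSeries_zero, ← MonoidHom.range_eq_map] at hbase
    rw [Subgroup.lowerCentralSeries_succ, Subgroup.lowerCentralSeries_zero,
      ← range_inl_sup_range_inr]
    refine commutator_sup_right_le (commutator_sup_left_le hbase.le ?_)
      (commutator_sup_left_le hNG (commutator_range_inr_self.trans_le bot_le))
    exact (commutator_comm _ _).trans_le hNG
  | succ n ih =>
    have hcentral : ⁅((⊤ : Subgroup N).lowerCentralSeries (n + 1)).map (inl : N →* N ⋊[φ] G),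
        (inr : G →* N ⋊[φ] G).range⁆ = ⊥ := by
      rw [commutator_comm, eq_bot_iff, ← hGN]
      exact commutator_mono le_rfl (map_mono (Subgroup.lowerCentralSeries_antitone _ (by omega)))
    calc (⊤ : Subgroup (N ⋊[φ] G)).lowerCentralSeries (n + 2)
        = ⁅(⊤ : Subgroup (N ⋊[φ] G)).lowerCentralSeries (n + 1), ⊤⁆ := rfl
      _ ≤ ⁅((⊤ : Subgroup N).lowerCentralSeries (n + 1)).map inl, inl.range ⊔ inr.range⁆ :=
        commutator_mono ih range_inl_sup_range_inr.ge
      _ ≤ ((⊤ : Subgroup N).lowerCentralSeries (n + 2)).map inl :=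
        commutator_sup_right_le (hinl (n + 1)).le (hcentral.trans_le bot_le)

end CommGroup

end SemidirectProduct

theorem gamma4_semidirect_general (G : Type*) [Group G]
    (A : Type*) [CommGroup A] (φ : A →* MulAut G)
    (hγ4 : Subgroup.lowerCentralSeries (⊤ : Subgroup G) 3 = ⊥)
    (hGA : ⁅(SemidirectProduct.inl : G →* G ⋊[φ] A).range,
        (SemidirectProduct.inr : A →* G ⋊[φ] A).range⁆
      ≤ (Subgroup.lowerCentralSeries (⊤ : Subgroup G) 2).map (SemidirectProduct.inl : G →* G ⋊[φ] A))
    (hAγ2 : ⁅(SemidirectProduct.inr : A →* G ⋊[φ] A).range,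
        (Subgroup.lowerCentralSeries (⊤ : Subgroup G) 1).map (SemidirectProduct.inl : G →* G ⋊[φ] A)⁆ = ⊥) :
    Subgroup.lowerCentralSeries (⊤ : Subgroup (G ⋊[φ] A)) 3 = ⊥ := by
  have hGA₁ := hGA.trans
    (Subgroup.map_mono (Subgroup.lowerCentralSeries_antitone _ (by norm_num : 1 ≤ 2)))
  have hS := SemidirectProduct.lowerCentralSeries_succ_le_map_inl hGA₁ hAγ2 2
  rwa [hγ4, Subgroup.map_bot, le_bot_iff] at hS

/-- If `G` is a finite `p`-group of class at most 3 with `γ₂(G)^p γ₄(G) = 1` and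
`S = G ⋊ A` with `A` abelian, `[G,A] ⊆ γ₃(G)`, `[A, γ₂(G)] = 1`, then `γ₄(S) = 1`,
i.e. `S` has nilpotency class at most 3. -/
theorem gamma4_semidirect (p : ℕ) [Fact p.Prime] (G : Type*) [Group G] [Fintype G]
    (hG : IsPGroup p G) (A : Type*) [CommGroup A] (φ : A →* MulAut G)
    (hexp : ∀ x ∈ Subgroup.lowerCentralSeries (⊤ : Subgroup G) 1, x ^ p = 1)
    (hγ4 : Subgroup.lowerCentralSeries (⊤ : Subgroup G) 3 = ⊥)
    (hGA : ⁅(SemidirectProduct.inl : G →* G ⋊[φ] A).range,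
        (SemidirectProduct.inr : A →* G ⋊[φ] A).range⁆
      ≤ (Subgroup.lowerCentralSeries (⊤ : Subgroup G) 2).map (SemidirectProduct.inl : G →* G ⋊[φ] A))
    (hAγ2 : ⁅(SemidirectProduct.inr : A →* G ⋊[φ] A).range,
        (Subgroup.lowerCentralSeries (⊤ : Subgroup G) 1).map (SemidirectProduct.inl : G →* G ⋊[φ] A)⁆ = ⊥) :
    Subgroup.lowerCentralSeries (⊤ : Subgroup (G ⋊[φ] A)) 3 = ⊥ :=
  gamma4_semidirect_general G A φ hγ4 hGA hAγ2
end

section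
/- Let G be a finite p-group of class at most 3 with γ₂(G) elementary abelian, and S = G ⋊ A with A abelian, [G,A] ⊆ γ₃(G), [A, γ₂(G)] = 1, and [Z₂(G), A] = 1. Then Z₂(S) = Z₂(G) × A (an internal direct product) and Z₂(S) ∩ G = Z₂(G). -/
/-! `A` fixes `γ₂(G)` and `Z₂(G)` pointwise and moves each `g ∈ G` only by a factor in `γ₃(G)`,
which is central because `γ₄(G) = 1`. So every commutator `[a, s]` with `a ∈ A`, `s ∈ S` is an
`A`-fixed central element of `G`, hence central in `S`, giving `A ≤ Z₂(S)`. For `z ∈ Z₂(G)` the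
commutator `[z, s]` lies in `Z(G) ≤ Z₂(G)`, again `A`-fixed, so `Z₂(G) ≤ Z₂(S)`; conversely
`Z₂(S) ∩ G ≤ Z₂(G)` holds for any subgroup `G ≤ S`. As `Z₂(S)` contains `A`, it is the product
of `Z₂(S) ∩ G` and `A`. -/

open SemidirectProduct
open scoped commutatorElement

namespace Subgroup

variable {G H : Type*} [Group G] [Group H]

theorem top_lowerCentralSeries_succ_eq_bot_iff {n : ℕ} :
    (⊤ : Subgroup G).lowerCentralSeries (n + 1) = ⊥ ↔
      (⊤ : Subgroup G).lowerCentralSeries n ≤ center G := by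
  rw [lowerCentralSeries_succ, commutator_eq_bot_iff_le_centralizer, coe_top, centralizer_univ]

theorem comap_upperCentralSeries_le_of_injective {f : G →* H} (hf : Function.Injective f) :
    ∀ n, (upperCentralSeries H n).comap f ≤ upperCentralSeries G n
  | 0 => by simpa [upperCentralSeries_zero, ← MonoidHom.ker_eq_bot_iff] using hf
  | n + 1 => fun x hx y =>
    comap_upperCentralSeries_le_of_injective hf n <| by
      rw [mem_comap, map_commutatorElement]
      exact mem_upperCentralSeries_succ_iff.mp hx (f y)

end Subgroup

namespace SemidirectProduct

open Subgroup

variable {N G : Type*} [Group N] [Group G] {φ : G →* MulAut N}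

theorem commutatorElement_inl_inr (n : N) (g : G) :
    ⁅(inl n : N ⋊[φ] G), (inr g : N ⋊[φ] G)⁆ = inl (n * (φ g n)⁻¹) := by
  ext <;> simp [commutatorElement_def]

theorem commutatorElement_inl_of_apply_eq {n : N} {x : N ⋊[φ] G} (h : φ x.right n = n) :
    ⁅(inl n : N ⋊[φ] G), x⁆ = inl ⁅n, x.left⁆ := by
  ext <;> simp [commutatorElement_def, h, mul_assoc]

theorem commutatorElement_inr {A : Type*} [CommGroup A] {ψ : A →* MulAut N} (a : A)
    (x : N ⋊[ψ] A) : ⁅(inr a : N ⋊[ψ] A), x⁆ = inl (ψ a x.left * x.left⁻¹) := by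
  ext
  · simp [commutatorElement_def, mul_comm a x.right]
  · simp [commutatorElement_def]

theorem inl_mem_center_iff {n : N} :
    (inl n : N ⋊[φ] G) ∈ center (N ⋊[φ] G) ↔ n ∈ center N ∧ ∀ g, φ g n = n := by
  refine ⟨fun h => ⟨mem_center_iff.mpr fun m => ?_, fun g => ?_⟩,
    fun ⟨hn, hfix⟩ => mem_center_iff.mpr fun x => ?_⟩
  · exact inl_injective (by simpa using mem_center_iff.mp h (inl m))
  · simpa using congrArg left (mem_center_iff.mp h (inr g))
  · ext <;> simp [hfix, mem_center_iff.mp hn x.left]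

theorem commutator_map_inl_range_inr_eq_bot_iff {H : Subgroup N} :
    ⁅H.map (inl : N →* N ⋊[φ] G), (inr : G →* N ⋊[φ] G).range⁆ = ⊥ ↔
      ∀ g, ∀ n ∈ H, φ g n = n := by
  simp only [← le_bot_iff, commutator_le, mem_map, MonoidHom.mem_range, forall_exists_index,
    and_imp, forall_apply_eq_imp_iff₂, forall_apply_eq_imp_iff, commutatorElement_inl_inr,
    mem_bot, map_eq_one_iff _ inl_injective, mul_inv_eq_one]
  exact ⟨fun h g n hn => (h n hn g).symm, fun h n hn g => (h g n hn).symm⟩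

theorem commutator_range_inl_range_inr_le_map_inl_iff {H : Subgroup N} :
    ⁅(inl : N →* N ⋊[φ] G).range, (inr : G →* N ⋊[φ] G).range⁆ ≤ H.map inl ↔
      ∀ g n, φ g n * n⁻¹ ∈ H := by
  simp only [commutator_le, MonoidHom.mem_range, forall_exists_index,
    forall_apply_eq_imp_iff, commutatorElement_inl_inr, mem_map_iff_mem inl_injective]
  refine ⟨fun h g n => ?_, fun h n g => ?_⟩
  · simpa using inv_mem (h n g)
  · simpa using inv_mem (h g n)

theorem map_inl_upperCentralSeries_two_le
    (hfix : ∀ g, ∀ n ∈ Subgroup.upperCentralSeries N 2, φ g n = n) :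
    (Subgroup.upperCentralSeries N 2).map (inl : N →* N ⋊[φ] G) ≤
      Subgroup.upperCentralSeries (N ⋊[φ] G) 2 := by
  rintro _ ⟨n, hn, rfl⟩
  refine Subgroup.mem_upperCentralSeries_succ_iff.mpr fun x => ?_
  have hcomm : ⁅n, x.left⁆ ∈ center N := by
    simpa using Subgroup.mem_upperCentralSeries_succ_iff.mp hn x.left
  have hcomm₂ : ⁅n, x.left⁆ ∈ Subgroup.upperCentralSeries N 2 :=
    Subgroup.upperCentralSeries_mono N (show 1 ≤ 2 by norm_num)
      (by rwa [Subgroup.upperCentralSeries_one])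
  rw [commutatorElement_inl_of_apply_eq (hfix _ n hn), Subgroup.upperCentralSeries_one]
  exact inl_mem_center_iff.mpr ⟨hcomm, fun g => hfix g _ hcomm₂⟩

theorem range_inr_le_upperCentralSeries_two {A : Type*} [CommGroup A] {ψ : A →* MulAut N}
    (H : Subgroup N) (hH : H ≤ center N) (hfix : ∀ a, ∀ n ∈ H, ψ a n = n)
    (hact : ∀ a n, ψ a n * n⁻¹ ∈ H) :
    (inr : A →* N ⋊[ψ] A).range ≤ Subgroup.upperCentralSeries (N ⋊[ψ] A) 2 := by
  rintro _ ⟨a, rfl⟩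
  refine Subgroup.mem_upperCentralSeries_succ_iff.mpr fun x => ?_
  rw [commutatorElement_inr, Subgroup.upperCentralSeries_one]
  exact inl_mem_center_iff.mpr ⟨hH (hact a x.left), fun b => hfix b _ (hact a x.left)⟩

theorem eq_map_comap_inl_sup_range_inr {K : Subgroup (N ⋊[φ] G)}
    (hK : (inr : G →* N ⋊[φ] G).range ≤ K) :
    K = (K.comap inl).map inl ⊔ (inr : G →* N ⋊[φ] G).range := by
  refine le_antisymm (fun x hx => ?_) (sup_le (map_comap_le _ _) hK)
  have hleft : inl x.left ∈ K := by
    rw [eq_mul_inv_of_mul_eq (inl_left_mul_inr_right x)]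
    exact mul_mem hx (inv_mem (hK ⟨x.right, rfl⟩))
  rw [← inl_left_mul_inr_right x]
  exact mul_mem (mem_sup_left (mem_map_of_mem inl hleft)) (mem_sup_right ⟨x.right, rfl⟩)

theorem map_inl_inf_range_inr_eq_bot (H : Subgroup N) :
    H.map (inl : N →* N ⋊[φ] G) ⊓ (inr : G →* N ⋊[φ] G).range = ⊥ := by
  refine eq_bot_iff.mpr ?_
  rintro _ ⟨⟨n, -, rfl⟩, g, hg⟩
  have hg1 : g = 1 := by simpa using congrArg right hg
  rw [mem_bot, ← hg, hg1, map_one]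

end SemidirectProduct

theorem secondCenter_semidirect_general (G : Type*) [Group G]
    (A : Type*) [CommGroup A] (φ : A →* MulAut G)
    (hclass : (⊤ : Subgroup G).lowerCentralSeries 3 = ⊥)
    (hGA : ⁅(SemidirectProduct.inl : G →* G ⋊[φ] A).range,
        (SemidirectProduct.inr : A →* G ⋊[φ] A).range⁆
      ≤ ((⊤ : Subgroup G).lowerCentralSeries 2).map (SemidirectProduct.inl : G →* G ⋊[φ] A))
    (hAγ2 : ⁅(SemidirectProduct.inr : A →* G ⋊[φ] A).range,
        ((⊤ : Subgroup G).lowerCentralSeries 1).map (SemidirectProduct.inl : G →* G ⋊[φ] A)⁆ = ⊥)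
    (hZ2A : ⁅(Subgroup.upperCentralSeries G 2).map (SemidirectProduct.inl : G →* G ⋊[φ] A),
        (SemidirectProduct.inr : A →* G ⋊[φ] A).range⁆ = ⊥) :
    Subgroup.upperCentralSeries (G ⋊[φ] A) 2
        = (Subgroup.upperCentralSeries G 2).map (SemidirectProduct.inl : G →* G ⋊[φ] A)
            ⊔ (SemidirectProduct.inr : A →* G ⋊[φ] A).range
      ∧ (Subgroup.upperCentralSeries G 2).map (SemidirectProduct.inl : G →* G ⋊[φ] A)
            ⊓ (SemidirectProduct.inr : A →* G ⋊[φ] A).range = ⊥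
      ∧ Subgroup.upperCentralSeries (G ⋊[φ] A) 2 ⊓ (SemidirectProduct.inl : G →* G ⋊[φ] A).range
          = (Subgroup.upperCentralSeries G 2).map (SemidirectProduct.inl : G →* G ⋊[φ] A) := by
  have hfixγ₂ : ∀ a, ∀ x ∈ (⊤ : Subgroup G).lowerCentralSeries 1, φ a x = x :=
    commutator_map_inl_range_inr_eq_bot_iff.mp (by rwa [Subgroup.commutator_comm])
  have hZ₂ : (Subgroup.upperCentralSeries (G ⋊[φ] A) 2).comap inl =
      Subgroup.upperCentralSeries G 2 :=
    le_antisymm (Subgroup.comap_upperCentralSeries_le_of_injective inl_injective 2)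
      (Subgroup.map_le_iff_le_comap.mp
        (map_inl_upperCentralSeries_two_le (commutator_map_inl_range_inr_eq_bot_iff.mp hZ2A)))
  have hA : (inr : A →* G ⋊[φ] A).range ≤ Subgroup.upperCentralSeries (G ⋊[φ] A) 2 :=
    range_inr_le_upperCentralSeries_two _
      (Subgroup.top_lowerCentralSeries_succ_eq_bot_iff.mp hclass)
      (fun a x hx => hfixγ₂ a x (Subgroup.lowerCentralSeries_antitone ⊤ (by norm_num) hx))
      (commutator_range_inl_range_inr_le_map_inl_iff.mp hGA)
  refine ⟨?_, map_inl_inf_range_inr_eq_bot _, ?_⟩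
  · rw [← hZ₂]
    exact eq_map_comap_inl_sup_range_inr hA
  · rw [← hZ₂, Subgroup.map_comap_eq]
    exact inf_comm _ _

/-- If `G` is a finite `p`-group of class at most 3 with `γ₂(G)` elementary abelian and
`S = G ⋊ A` with `A` abelian, `[G,A] ⊆ γ₃(G)`, `[A, γ₂(G)] = 1` and `[Z₂(G), A] = 1`,
then `Z₂(S) = Z₂(G) × A` (internal direct product) and `Z₂(S) ∩ G = Z₂(G)`. -/
theorem secondCenter_semidirect (p : ℕ) [Fact p.Prime] (G : Type*) [Group G] [Fintype G]
    (hG : IsPGroup p G) (A : Type*) [CommGroup A] (φ : A →* MulAut G)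
    (hclass : (⊤ : Subgroup G).lowerCentralSeries 3 = ⊥)
    (hexp : ∀ x ∈ (⊤ : Subgroup G).lowerCentralSeries 1, x ^ p = 1)
    (habel : ∀ x ∈ (⊤ : Subgroup G).lowerCentralSeries 1, ∀ y ∈ (⊤ : Subgroup G).lowerCentralSeries 1, x * y = y * x)
    (hGA : ⁅(SemidirectProduct.inl : G →* G ⋊[φ] A).range,
        (SemidirectProduct.inr : A →* G ⋊[φ] A).range⁆
      ≤ ((⊤ : Subgroup G).lowerCentralSeries 2).map (SemidirectProduct.inl : G →* G ⋊[φ] A))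
    (hAγ2 : ⁅(SemidirectProduct.inr : A →* G ⋊[φ] A).range,
        ((⊤ : Subgroup G).lowerCentralSeries 1).map (SemidirectProduct.inl : G →* G ⋊[φ] A)⁆ = ⊥)
    (hZ2A : ⁅(Subgroup.upperCentralSeries G 2).map (SemidirectProduct.inl : G →* G ⋊[φ] A),
        (SemidirectProduct.inr : A →* G ⋊[φ] A).range⁆ = ⊥) :
    Subgroup.upperCentralSeries (G ⋊[φ] A) 2
        = (Subgroup.upperCentralSeries G 2).map (SemidirectProduct.inl : G →* G ⋊[φ] A)
            ⊔ (SemidirectProduct.inr : A →* G ⋊[φ] A).range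
      ∧ (Subgroup.upperCentralSeries G 2).map (SemidirectProduct.inl : G →* G ⋊[φ] A)
            ⊓ (SemidirectProduct.inr : A →* G ⋊[φ] A).range = ⊥
      ∧ Subgroup.upperCentralSeries (G ⋊[φ] A) 2 ⊓ (SemidirectProduct.inl : G →* G ⋊[φ] A).range
          = (Subgroup.upperCentralSeries G 2).map (SemidirectProduct.inl : G →* G ⋊[φ] A) :=
  secondCenter_semidirect_general G A φ hclass hGA hAγ2 hZ2A
end
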